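/- Let β > 0 and ε > 0, and define the hybrid scale density s_{β,ε}(x) = (1 − x²)^{−1} · exp( (e^β − 2/ε²) ∫_0^x e^{−βy}/(1 − y²) dy ) for x ∈ (−1, 1). Then there exist constants 0 < c ≤ C and δ₀ ∈ (0, 1) such that for all δ ∈ (0, δ₀): c · δ^{−3/2 + e^{−β}/ε²} ≤ s_{β,ε}(1 − δ) ≤ C · δ^{−3/2 + e^{−β}/ε²} and c · δ^{−1 + e^{2β}/2 − e^{β}/ε²} ≤ s_{β,ε}(−1 + δ) ≤ C · δ^{−1 + e^{2β}/2 − e^{β}/ε²}. -/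

import Mathlib

open Real

/-- Hybrid scale density
`s_{β,ε}(x) = (1 − x²)⁻¹ exp((e^β − 2/ε²) ∫₀ˣ e^{−βy}/(1 − y²) dy)`. -/
noncomputable def hybridScaleDensity (β ε x : ℝ) : ℝ :=
  (1 - x ^ 2)⁻¹ *
    exp ((exp β - 2 / ε ^ 2) * ∫ y in (0 : ℝ)..x, exp (-β * y) / (1 - y ^ 2))

open intervalIntegral

lemma exp_sub_one_le' (t : ℝ) (ht : 0 ≤ t) : exp t - 1 ≤ t * exp t := by
  have h1 : (-t) + 1 ≤ exp (-t) := add_one_le_exp _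
  have h2 : exp (-t) * exp t = 1 := by rw [← exp_add]; simp
  nlinarith [exp_pos t]

-- pointwise bound near +1
lemma hbound1 (β : ℝ) (hβ : 0 < β) (y : ℝ) (h0 : 0 ≤ y) (h1 : y < 1) :
    |exp (-β * y) / (1 - y ^ 2) - exp (-β) / (2 * (1 - y))| ≤ β + 1 := by
  have hy1 : (0:ℝ) < 1 - y := by linarith
  have hy2 : (1:ℝ) ≤ 1 + y := by linarith
  have hsq : 1 - y ^ 2 = (1 - y) * (1 + y) := by ring
  set t := β * (1 - y) with htdef
  have ht : 0 ≤ t := by positivity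
  -- e^{-βy} = e^{-β} * e^t
  have hE : exp (-β * y) = exp (-β) * exp t := by
    rw [← exp_add, htdef]; ring_nf
  have het : exp t - 1 ≤ t * exp t := exp_sub_one_le' t ht
  have het2 : exp t ≤ exp β := by
    apply exp_le_exp.mpr; nlinarith
  have het3 : 1 ≤ exp t := by
    have := add_one_le_exp t; linarith
  -- identity
  have hid : exp (-β * y) / (1 - y ^ 2) - exp (-β) / (2 * (1 - y))
      = (2 * exp (-β * y) - exp (-β) * (1 + y)) / (2 * (1 - y) * (1 + y)) := by
    rw [hsq]; field_simp
  rw [hid]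
  have hNpos : 0 ≤ 2 * exp (-β * y) - exp (-β) * (1 + y) := by
    rw [hE]; nlinarith [exp_pos (-β)]
  have hNle : 2 * exp (-β * y) - exp (-β) * (1 + y) ≤ (2 * β + 1) * (1 - y) := by
    rw [hE]
    have hb : exp (-β) * exp β = 1 := by rw [← exp_add]; simp
    have : exp t - 1 ≤ t * exp β := by nlinarith [exp_pos t]
    have hexpb1 : exp (-β) ≤ 1 := by
      rw [exp_le_one_iff]; linarith
    nlinarith [exp_pos (-β)]
  have hden : (0:ℝ) < 2 * (1 - y) * (1 + y) := by nlinarith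
  rw [abs_div, abs_of_nonneg hNpos, abs_of_pos hden, div_le_iff₀ hden]
  nlinarith

lemma hbound2 (β : ℝ) (hβ : 0 < β) (y : ℝ) (h0 : y ≤ 0) (h1 : -1 < y) :
    |exp (-β * y) / (1 - y ^ 2) - exp β / (2 * (1 + y))| ≤ exp β * (1 + 2 * β) / 2 := by
  have hy1 : (0:ℝ) < 1 + y := by linarith
  have hy2 : (1:ℝ) ≤ 1 - y := by linarith
  have hsq : 1 - y ^ 2 = (1 - y) * (1 + y) := by ring
  set t := β * (1 + y) with htdef
  have ht : 0 ≤ t := by positivity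
  have hE : exp (-β * y) = exp β * exp (-t) := by
    rw [← exp_add, htdef]; ring_nf
  have het1 : exp (-t) ≤ 1 := by rw [exp_le_one_iff]; linarith
  have het2 : 1 - t ≤ exp (-t) := by have := add_one_le_exp (-t); linarith
  have hid : exp (-β * y) / (1 - y ^ 2) - exp β / (2 * (1 + y))
      = (2 * exp (-β * y) - exp β * (1 - y)) / (2 * (1 - y) * (1 + y)) := by
    rw [hsq]; field_simp
  rw [hid]
  have hden : (0:ℝ) < 2 * (1 - y) * (1 + y) := by nlinarith
  have hNub : 2 * exp (-β * y) - exp β * (1 - y) ≤ exp β * (1 + y) := by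
    rw [hE]; nlinarith [exp_pos β]
  have hNlb : -(exp β * (1 + 2*β) * (1 + y)) ≤ 2 * exp (-β * y) - exp β * (1 - y) := by
    rw [hE]; nlinarith [exp_pos β]
  have hp : (1:ℝ) ≤ (1 + 2*β) * (1 - y) := by nlinarith
  rw [abs_div, abs_of_pos hden, div_le_iff₀ hden, abs_le]
  have hkey : exp β * (1 + y) ≤ exp β * (1 + 2*β) * ((1 - y) * (1 + y)) := by
    have := mul_le_mul_of_nonneg_left hp (le_of_lt (mul_pos (exp_pos β) hy1))
    nlinarith
  constructor
  · nlinarith [mul_pos (exp_pos β) hy1]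
  · nlinarith [mul_pos (exp_pos β) hy1]

lemma intA (β : ℝ) (hβ : 0 < β) (δ : ℝ) (hδ0 : 0 < δ) (hδ : δ < 1/2) :
    |(∫ y in (0:ℝ)..(1-δ), exp (-β*y)/(1-y^2)) + exp (-β)/2 * log δ| ≤ β + 1 := by
  set b := 1 - δ with hbdef
  have hb0 : 0 < b := by rw [hbdef]; linarith
  have hb1' : b < 1 := by rw [hbdef]; linarith
  have huIcc : Set.uIcc (0:ℝ) b = Set.Icc 0 b := Set.uIcc_of_le hb0.le
  have hgc : ContinuousOn (fun y => exp (-β*y)/(1-y^2)) (Set.uIcc (0:ℝ) b) := by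
    apply ContinuousOn.div
    · fun_prop
    · fun_prop
    · intro y hy
      rw [huIcc] at hy
      have h1 : y ≤ b := hy.2
      have h2 : 0 ≤ y := hy.1
      nlinarith
  have hgi : IntervalIntegrable (fun y => exp (-β*y)/(1-y^2)) MeasureTheory.volume 0 b :=
    hgc.intervalIntegrable
  have hpc : ContinuousOn (fun y => exp (-β)/(2*(1-y))) (Set.uIcc (0:ℝ) b) := by
    apply ContinuousOn.div
    · fun_prop
    · fun_prop
    · intro y hy
      rw [huIcc] at hy
      have h1 : y ≤ b := hy.2
      nlinarith
  have hpi : IntervalIntegrable (fun y => exp (-β)/(2*(1-y))) MeasureTheory.volume 0 b :=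
    hpc.intervalIntegrable
  have hftc : (∫ y in (0:ℝ)..b, exp (-β)/(2*(1-y))) = -(exp (-β)/2) * log δ := by
    have h : (∫ y in (0:ℝ)..b, exp (-β)/(2*(1-y)))
        = (fun y => -(exp (-β)/2) * log (1-y)) b - (fun y => -(exp (-β)/2) * log (1-y)) 0 := by
      refine integral_eq_sub_of_hasDerivAt (f := fun y => -(exp (-β)/2) * log (1-y)) (fun y hy => ?_) hpi
      · 
        rw [huIcc] at hy
        have hy1 : (0:ℝ) < 1 - y := by nlinarith [hy.2]
        have hd : HasDerivAt (fun y : ℝ => 1 - y) (-1) y := by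
          exact (hasDerivAt_id' y).const_sub (1:ℝ)
        have h2 := (hd.log hy1.ne').const_mul (-(exp (-β)/2))
        convert h2 using 1
        · rfl
        field_simp
    rw [h]
    simp only [hbdef]
    rw [show (1:ℝ) - (1 - δ) = δ by ring]
    simp
  have hsplit : (∫ y in (0:ℝ)..b, exp (-β*y)/(1-y^2))
      = (∫ y in (0:ℝ)..b, exp (-β)/(2*(1-y)))
        + ∫ y in (0:ℝ)..b, (exp (-β*y)/(1-y^2) - exp (-β)/(2*(1-y))) := by
    rw [integral_sub hgi hpi]; ring
  have hrem : |∫ y in (0:ℝ)..b, (exp (-β*y)/(1-y^2) - exp (-β)/(2*(1-y)))| ≤ β + 1 := by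
    have h := intervalIntegral.norm_integral_le_of_norm_le_const (C := β + 1)
      (f := fun y => exp (-β*y)/(1-y^2) - exp (-β)/(2*(1-y))) (a := 0) (b := b) ?_
    · calc |∫ y in (0:ℝ)..b, (exp (-β*y)/(1-y^2) - exp (-β)/(2*(1-y)))|
          ≤ (β+1) * |b - 0| := h
        _ ≤ β + 1 := by
            rw [abs_of_pos (by linarith : (0:ℝ) < b - 0)]
            nlinarith
    · intro y hy
      rw [Set.uIoc_of_le hb0.le] at hy
      have := hbound1 β hβ y hy.1.le (lt_of_le_of_lt hy.2 hb1')
      simpa using this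
  rw [hsplit, hftc]
  have heq : -(exp (-β)/2) * log δ + (∫ y in (0:ℝ)..b, (exp (-β*y)/(1-y^2) - exp (-β)/(2*(1-y))))
      + exp (-β)/2 * log δ = ∫ y in (0:ℝ)..b, (exp (-β*y)/(1-y^2) - exp (-β)/(2*(1-y))) := by ring
  rw [heq]
  exact hrem

lemma intB (β : ℝ) (hβ : 0 < β) (δ : ℝ) (hδ0 : 0 < δ) (hδ : δ < 1/2) :
    |(∫ y in (0:ℝ)..(-1+δ), exp (-β*y)/(1-y^2)) - exp β/2 * log δ|
      ≤ exp β * (1 + 2*β)/2 := by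
  set a := -1 + δ with hadef
  have ha0 : a < 0 := by rw [hadef]; linarith
  have ha1 : -1 < a := by rw [hadef]; linarith
  have huIcc : Set.uIcc (0:ℝ) a = Set.Icc a 0 := by
    rw [Set.uIcc_comm, Set.uIcc_of_le ha0.le]
  have hgc : ContinuousOn (fun y => exp (-β*y)/(1-y^2)) (Set.uIcc (0:ℝ) a) := by
    apply ContinuousOn.div
    · fun_prop
    · fun_prop
    · intro y hy
      rw [huIcc] at hy
      have h1 : a ≤ y := hy.1
      have h2 : y ≤ 0 := hy.2
      nlinarith
  have hgi : IntervalIntegrable (fun y => exp (-β*y)/(1-y^2)) MeasureTheory.volume 0 a :=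
    hgc.intervalIntegrable
  have hpc : ContinuousOn (fun y => exp β/(2*(1+y))) (Set.uIcc (0:ℝ) a) := by
    apply ContinuousOn.div
    · fun_prop
    · fun_prop
    · intro y hy
      rw [huIcc] at hy
      have h1 : a ≤ y := hy.1
      nlinarith
  have hpi : IntervalIntegrable (fun y => exp β/(2*(1+y))) MeasureTheory.volume 0 a :=
    hpc.intervalIntegrable
  have hftc : (∫ y in (0:ℝ)..a, exp β/(2*(1+y))) = exp β/2 * log δ := by
    have h : (∫ y in (0:ℝ)..a, exp β/(2*(1+y)))
        = (fun y => exp β/2 * log (1+y)) a - (fun y => exp β/2 * log (1+y)) 0 := by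
      refine integral_eq_sub_of_hasDerivAt (f := fun y => exp β/2 * log (1+y))
        (fun y hy => ?_) hpi
      rw [huIcc] at hy
      have hy1 : (0:ℝ) < 1 + y := by nlinarith [hy.1]
      have hd : HasDerivAt (fun y : ℝ => 1 + y) 1 y := by
        exact (hasDerivAt_id' y).const_add (1:ℝ)
      have h2 := (hd.log hy1.ne').const_mul (exp β/2)
      convert h2 using 1
      · rfl
      field_simp
    rw [h]
    simp only [hadef]
    rw [show (1:ℝ) + (-1 + δ) = δ by ring]
    simp
  have hsplit : (∫ y in (0:ℝ)..a, exp (-β*y)/(1-y^2))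
      = (∫ y in (0:ℝ)..a, exp β/(2*(1+y)))
        + ∫ y in (0:ℝ)..a, (exp (-β*y)/(1-y^2) - exp β/(2*(1+y))) := by
    rw [integral_sub hgi hpi]; ring
  have hrem : |∫ y in (0:ℝ)..a, (exp (-β*y)/(1-y^2) - exp β/(2*(1+y)))|
      ≤ exp β * (1 + 2*β)/2 := by
    have h := intervalIntegral.norm_integral_le_of_norm_le_const (C := exp β * (1 + 2*β)/2)
      (f := fun y => exp (-β*y)/(1-y^2) - exp β/(2*(1+y))) (a := 0) (b := a) ?_
    · calc |∫ y in (0:ℝ)..a, (exp (-β*y)/(1-y^2) - exp β/(2*(1+y)))|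
          ≤ (exp β * (1 + 2*β)/2) * |a - 0| := h
        _ ≤ exp β * (1 + 2*β)/2 := by
            rw [abs_of_neg (by linarith : a - 0 < 0)]
            have hM : (0:ℝ) ≤ exp β * (1 + 2*β)/2 := by positivity
            nlinarith [mul_nonneg hM hδ0.le]
    · intro y hy
      rw [Set.uIoc_comm, Set.uIoc_of_le ha0.le] at hy
      have := hbound2 β hβ y hy.2 (lt_of_lt_of_le ha1 hy.1.le)
      simpa using this
  rw [hsplit, hftc]
  have heq : exp β/2 * log δ + (∫ y in (0:ℝ)..a, (exp (-β*y)/(1-y^2) - exp β/(2*(1+y))))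
      - exp β/2 * log δ = ∫ y in (0:ℝ)..a, (exp (-β*y)/(1-y^2) - exp β/(2*(1+y))) := by ring
  rw [heq]
  exact hrem

lemma assemble (δ P k J a E L I : ℝ) (hδ0 : 0 < δ)
    (hP1 : (2*δ)⁻¹ ≤ P) (hP2 : P ≤ δ⁻¹) (hE : E = -1 + a)
    (hJ : |k*J| ≤ L)
    (hI : exp (k * I) = exp (k*J) * δ ^ a) :
    (1/2) * exp (-L) * δ ^ E ≤ P * exp (k * I) ∧
      P * exp (k * I) ≤ exp L * δ ^ E := by
  have hPnn : (0:ℝ) ≤ P := le_trans (by positivity) hP1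
  have hδa : (0:ℝ) < δ ^ a := rpow_pos_of_pos hδ0 a
  have habs := abs_le.mp hJ
  have hlow : exp (-L) ≤ exp (k*J) := exp_le_exp.mpr (by linarith [habs.1])
  have hup : exp (k*J) ≤ exp L := exp_le_exp.mpr habs.2
  have hEe : δ ^ E = δ⁻¹ * δ ^ a := by
    rw [hE, rpow_add hδ0, rpow_neg_one]
  constructor
  · calc (1/2) * exp (-L) * δ ^ E = ((2*δ)⁻¹ * exp (-L)) * δ ^ a := by
          rw [hEe, mul_inv]; ring
      _ ≤ (P * exp (k*J)) * δ ^ a := by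
          apply mul_le_mul_of_nonneg_right _ hδa.le
          exact mul_le_mul hP1 hlow (exp_pos _).le hPnn
      _ = P * exp (k * I) := by rw [hI]; ring
  · calc P * exp (k * I) = (P * exp (k*J)) * δ ^ a := by rw [hI]; ring
      _ ≤ (δ⁻¹ * exp L) * δ ^ a := by
          apply mul_le_mul_of_nonneg_right _ hδa.le
          exact mul_le_mul hP2 hup (exp_pos _).le (by positivity)
      _ = exp L * δ ^ E := by rw [hEe]; ring

/-- Boundary asymptotics of the hybrid scale density:
`s_{β,ε}(1 − δ) ≍ δ^{−3/2 + e^{−β}/ε²}` and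
`s_{β,ε}(−1 + δ) ≍ δ^{−1 + e^{2β}/2 − e^{β}/ε²}`. -/
theorem hybrid_scale_density_asymptotics (β ε : ℝ) (hβ : 0 < β) (hε : 0 < ε) :
    ∃ c C : ℝ, 0 < c ∧ c ≤ C ∧ ∃ δ₀ : ℝ, 0 < δ₀ ∧ δ₀ < 1 ∧
      ∀ δ : ℝ, 0 < δ → δ < δ₀ →
        (c * δ ^ (-(3 / 2 : ℝ) + exp (-β) / ε ^ 2)
            ≤ hybridScaleDensity β ε (1 - δ) ∧
          hybridScaleDensity β ε (1 - δ)
            ≤ C * δ ^ (-(3 / 2 : ℝ) + exp (-β) / ε ^ 2)) ∧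
        (c * δ ^ ((-1 : ℝ) + exp (2 * β) / 2 - exp β / ε ^ 2)
            ≤ hybridScaleDensity β ε (-1 + δ) ∧
          hybridScaleDensity β ε (-1 + δ)
            ≤ C * δ ^ ((-1 : ℝ) + exp (2 * β) / 2 - exp β / ε ^ 2)) := by
  set k := exp β - 2 / ε ^ 2 with hkdef
  set M := max (β + 1) (exp β * (1 + 2*β)/2) with hMdef
  have hM0 : 0 ≤ M := le_trans (by linarith) (le_max_left _ _)
  set L := |k| * M with hLdef
  have hL0 : 0 ≤ L := mul_nonneg (abs_nonneg k) hM0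
  refine ⟨(1/2) * exp (-L), exp L, by positivity, ?_, 1/2, by norm_num, by norm_num, ?_⟩
  · have : exp (-L) ≤ exp L := exp_le_exp.mpr (by linarith)
    nlinarith [exp_pos L]
  intro δ hδ0 hδ
  -- prefactor bounds
  have hpre : 1 - (1 - δ)^2 = δ * (2 - δ) := by ring
  have hpre2 : 1 - (-1 + δ)^2 = δ * (2 - δ) := by ring
  have hd2 : (0:ℝ) < δ * (2 - δ) := by nlinarith
  have hP1 : (2*δ)⁻¹ ≤ (δ * (2 - δ))⁻¹ := by
    apply inv_anti₀ hd2; nlinarith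
  have hP2 : (δ * (2 - δ))⁻¹ ≤ δ⁻¹ := by
    apply inv_anti₀ hδ0; nlinarith
  -- key exponent identities
  have hb1 : exp β * exp (-β) = 1 := by rw [← exp_add]; simp
  have hb2 : exp β * exp β = exp (2*β) := by rw [← exp_add]; ring_nf
  have hε2 : (ε:ℝ)^2 ≠ 0 := by positivity
  have hk1 : k * (exp (-β)/2) = 1/2 - exp (-β)/ε^2 := by
    rw [hkdef]; field_simp; linear_combination (ε^2) * hb1
  have hk2 : k * (exp β/2) = exp (2*β)/2 - exp β/ε^2 := by
    rw [hkdef]; field_simp; linear_combination (ε^2) * hb2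
  -- side 1
  set I1 := ∫ y in (0:ℝ)..(1-δ), exp (-β * y) / (1 - y ^ 2) with hI1def
  set J1 := I1 + exp (-β)/2 * log δ with hJ1def
  have hJ1 : |k * J1| ≤ L := by
    rw [hLdef, abs_mul]
    exact mul_le_mul_of_nonneg_left
      (le_trans (intA β hβ δ hδ0 hδ) (le_max_left _ _)) (abs_nonneg k)
  have hEI1 : exp (k * I1) = exp (k*J1) * δ ^ ((-(1/2):ℝ) + exp (-β)/ε^2) := by
    rw [rpow_def_of_pos hδ0, ← exp_add]
    congr 1
    rw [hJ1def]
    linear_combination (-(log δ)) * hk1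
  -- side 2
  set I2 := ∫ y in (0:ℝ)..(-1+δ), exp (-β * y) / (1 - y ^ 2) with hI2def
  set J2 := I2 - exp β/2 * log δ with hJ2def
  have hJ2 : |k * J2| ≤ L := by
    rw [hLdef, abs_mul]
    exact mul_le_mul_of_nonneg_left
      (le_trans (intB β hβ δ hδ0 hδ) (le_max_right _ _)) (abs_nonneg k)
  have hEI2 : exp (k * I2) = exp (k*J2) * δ ^ (exp (2*β)/2 - exp β/ε^2) := by
    rw [rpow_def_of_pos hδ0, ← exp_add]
    congr 1
    rw [hJ2def]
    linear_combination (log δ) * hk2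
  have h1 := assemble δ ((δ * (2 - δ))⁻¹) k J1 ((-(1/2):ℝ) + exp (-β)/ε^2)
      (-(3 / 2 : ℝ) + exp (-β) / ε ^ 2) L I1 hδ0 hP1 hP2 (by ring) hJ1 hEI1
  have h2 := assemble δ ((δ * (2 - δ))⁻¹) k J2 (exp (2*β)/2 - exp β/ε^2)
      ((-1 : ℝ) + exp (2 * β) / 2 - exp β / ε ^ 2) L I2 hδ0 hP1 hP2 (by ring) hJ2 hEI2
  constructor
  · simp only [hybridScaleDensity]
    rw [← hkdef, ← hI1def, hpre]
    exact h1
  · simp only [hybridScaleDensity]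
    rw [← hkdef, ← hI2def, hpre2]
    exact h2
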